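/- arXiv:1212.4401 — 3 statements merged into one kernel-verified Lean document; each statement's English description precedes it below -/
import Mathlib

section
/- The angle arctan(1/2) is an irrational multiple of 2π; that is, there is no rational number q with arctan(1/2) = 2πq. -/
/-!
If `arctan x` is a rational multiple of `π` for rational `x`, then so is `2 arctan x`, whose cosine
`(1 - x²) / (1 + x²)` is rational. By Niven's theorem that cosine lies in `{-1, -1/2, 0, 1/2, 1}`,
which forces `x² ∈ {3, 1, 1/3, 0}`; as `3` is not a rational square, `x ∈ {0, 1, -1}`.
-/

open Real

theorem Real.cos_two_mul_arctan (x : ℝ) : cos (2 * arctan x) = (1 - x ^ 2) / (1 + x ^ 2) := by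
  rw [cos_two_mul, cos_sq_arctan]
  field_simp
  ring

theorem Rat.sq_ne_three (x : ℚ) : x ^ 2 ≠ 3 := by
  intro h
  obtain ⟨n, hn⟩ := Rat.isSquare_ofNat_iff.mp (⟨x, by rw [← h, sq]⟩ : IsSquare (3 : ℚ))
  have : n ≤ 2 := by nlinarith
  interval_cases n <;> omega

theorem Real.eq_zero_or_sq_eq_one_of_arctan_eq_rat_mul_pi {x r : ℚ} (h : arctan x = r * π) :
    x = 0 ∨ x ^ 2 = 1 := by
  have hcos := niven (θ := 2 * arctan x) ⟨2 * r, by rw [h]; push_cast; ring⟩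
    ⟨(1 - x ^ 2) / (1 + x ^ 2), by rw [cos_two_mul_arctan]; push_cast; rfl⟩
  have hpos : (0 : ℝ) < 1 + (x : ℝ) ^ 2 := by positivity
  rw [cos_two_mul_arctan] at hcos
  simp only [Set.mem_insert_iff, Set.mem_singleton_iff, div_eq_iff hpos.ne'] at hcos
  rcases hcos with h | h | h | h | h
  · nlinarith
  · exact absurd (by exact_mod_cast (by linarith : (x : ℝ) ^ 2 = 3)) (Rat.sq_ne_three x)
  · exact Or.inr (by exact_mod_cast (by linarith : (x : ℝ) ^ 2 = 1))
  · exact absurd (by exact_mod_cast (by push_cast; nlinarith : ((3 * x : ℚ) : ℝ) ^ 2 = 3))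
      (Rat.sq_ne_three (3 * x))
  · exact Or.inl (by exact_mod_cast (by nlinarith : (x : ℝ) = 0))

/-- The angle `arctan (1/2)` is an irrational multiple of `2π`: there is no rational
number `q` with `arctan (1/2) = 2πq`. -/
theorem arctan_half_not_rat_mul_two_pi :
    ¬ ∃ q : ℚ, Real.arctan (1 / 2) = 2 * Real.pi * (q : ℝ) := by
  rintro ⟨q, hq⟩
  have := eq_zero_or_sq_eq_one_of_arctan_eq_rat_mul_pi (x := 1 / 2) (r := 2 * q)
    (by push_cast; rw [hq]; ring)
  norm_num at this
end

section
/- Let M be the 5×5 integer matrix with rows (25,0,0,0,0), (0,3,0,0,0), (0,0,3,0,0), (15300,75,-450,1,0), (5400,75,-450,0,1), and let N ⊆ ℤ⁵ be the subgroup generated by the eigenvectors (2,0,0,1275,450), (0,6,1,0,0), (0,2,0,75,75). Then M maps N into N, and the induced map on the quotient ℤ⁵/N is the identity. -/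
/-! Every column of `pinwheelM - 1` lies in `eigenSubgroup`: writing `e₁, e₂, e₃` for its three
generators, the columns are `12 e₁`, `e₃`, `2 e₂ - 6 e₃`, `0`, `0`. Hence `M v - v ∈ N` for every
`v ∈ ℤ⁵`, which says both that `M` preserves `N` and that `M` is the identity modulo `N`. -/

/-- The 5×5 integer matrix arising from the Pinwheel substitution on `H²`. -/
def pinwheelM : Matrix (Fin 5) (Fin 5) ℤ :=
  !![25, 0, 0, 0, 0;
     0, 3, 0, 0, 0;
     0, 0, 3, 0, 0;
     15300, 75, -450, 1, 0;
     5400, 75, -450, 0, 1]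

/-- The subgroup of `ℤ⁵` generated by the three eigenvectors of `pinwheelM`. -/
def eigenSubgroup : AddSubgroup (Fin 5 → ℤ) :=
  AddSubgroup.closure {![2, 0, 0, 1275, 450], ![0, 6, 1, 0, 0], ![0, 2, 0, 75, 75]}

open Matrix

theorem Matrix.mulVec_mem_of_forall_col_mem {m n : Type*} [Fintype n] (A : Matrix m n ℤ)
    {N : AddSubgroup (m → ℤ)} (hA : ∀ j, A.col j ∈ N) (v : n → ℤ) : A *ᵥ v ∈ N := by
  rw [mulVec_eq_sum]
  exact N.sum_mem fun j _ => by simpa [col] using N.zsmul_mem (hA j) (v j)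

theorem AddSubgroup.mem_of_sub_mem {G : Type*} [AddGroup G] {N : AddSubgroup G} {a b : G}
    (hab : a - b ∈ N) (hb : b ∈ N) : a ∈ N := by
  simpa using N.add_mem hab hb

theorem col_pinwheelM_sub_one_mem_eigenSubgroup (j : Fin 5) :
    col (pinwheelM - 1) j ∈ eigenSubgroup := by
  have e₁ : ![2, 0, 0, 1275, 450] ∈ eigenSubgroup := AddSubgroup.subset_closure (by simp)
  have e₂ : ![0, 6, 1, 0, 0] ∈ eigenSubgroup := AddSubgroup.subset_closure (by simp)
  have e₃ : ![0, 2, 0, 75, 75] ∈ eigenSubgroup := AddSubgroup.subset_closure (by simp)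
  fin_cases j
  · convert eigenSubgroup.zsmul_mem e₁ 12 using 1
    ext i; fin_cases i <;> rfl
  · convert e₃ using 1
    ext i; fin_cases i <;> rfl
  · convert eigenSubgroup.sub_mem (eigenSubgroup.zsmul_mem e₂ 2) (eigenSubgroup.zsmul_mem e₃ 6)
      using 1
    ext i; fin_cases i <;> rfl
  all_goals
    convert eigenSubgroup.zero_mem using 1
    ext i; fin_cases i <;> rfl

theorem pinwheelM_mulVec_sub_self_mem_eigenSubgroup (v : Fin 5 → ℤ) :
    pinwheelM *ᵥ v - v ∈ eigenSubgroup := by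
  simpa [sub_mulVec] using
    (pinwheelM - 1).mulVec_mem_of_forall_col_mem col_pinwheelM_sub_one_mem_eigenSubgroup v

/-- `pinwheelM` maps `N` into `N`, and the induced map on the quotient `ℤ⁵/N`
is the identity. -/
theorem pinwheelM_maps_eigenSubgroup_and_induces_id :
    (∀ v ∈ eigenSubgroup, pinwheelM.mulVec v ∈ eigenSubgroup) ∧
    (∀ v : Fin 5 → ℤ,
      (QuotientAddGroup.mk (pinwheelM.mulVec v) : (Fin 5 → ℤ) ⧸ eigenSubgroup) =
        QuotientAddGroup.mk v) :=
  ⟨fun v hv => AddSubgroup.mem_of_sub_mem (pinwheelM_mulVec_sub_self_mem_eigenSubgroup v) hv,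
    fun v => QuotientAddGroup.eq_iff_sub_mem.mpr (pinwheelM_mulVec_sub_self_mem_eigenSubgroup v)⟩
end

section
/- Let M be the 5×5 integer matrix with rows (25,0,0,0,0), (0,3,0,0,0), (0,0,3,0,0), (15300,75,-450,1,0), (5400,75,-450,0,1). The direct limit of the system ℤ⁵ → ℤ⁵ → ⋯ with all connecting maps equal to M is isomorphic (as an abelian group) to ℤ[1/25] ⊕ ℤ[1/3]² ⊕ ℤ². -/
/-- The subgroup of `ℚ` consisting of rationals whose denominator is a power of `p`. -/
def zOneOver (p : ℕ) (hp : 0 < p) : AddSubgroup ℚ where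
  carrier := {q | ∃ (a : ℤ) (n : ℕ), q = a / (p : ℚ) ^ n}
  zero_mem' := ⟨0, 0, by simp⟩
  add_mem' := by
    rintro x y ⟨a, n, rfl⟩ ⟨b, m, rfl⟩
    refine ⟨a * (p : ℤ) ^ m + b * (p : ℤ) ^ n, n + m, ?_⟩
    have h : (p : ℚ) ≠ 0 := by positivity
    have h1 : (p : ℚ) ^ n ≠ 0 := pow_ne_zero _ h
    have h2 : (p : ℚ) ^ m ≠ 0 := pow_ne_zero _ h
    push_cast
    rw [div_add_div _ _ h1 h2, ← pow_add]
    ring_nf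
  neg_mem' := by
    rintro x ⟨a, n, rfl⟩
    exact ⟨-a, n, by push_cast; ring⟩

/-- The directed system over `ℕ` obtained by iterating a fixed endomorphism `A`. -/
def iterMap {G : Type*} [AddCommGroup G] (A : AddMonoid.End G) : ∀ i j : ℕ, i ≤ j → G →+ G :=
  fun i j _ => A ^ (j - i)

instance iterMap.directedSystem {G : Type*} [AddCommGroup G] (A : AddMonoid.End G) :
    DirectedSystem (fun _ : ℕ => G) (fun i j h => iterMap A i j h) where
  map_self := by
    intro i x
    show (A ^ (i - i)) x = x
    simp
  map_map := by
    intro k j i hij hjk x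
    have h : (k - j) + (j - i) = k - i := by omega
    calc (A ^ (k - j)) ((A ^ (j - i)) x) = ((A ^ (k - j)) * (A ^ (j - i))) x := rfl
      _ = (A ^ (k - i)) x := by rw [← pow_add, h]

/-!
`pinwheelM` multiplies the coordinates `x₀, x₁, x₂` by `25, 3, 3` and leaves the functionals
`ℓ₁ = -825 x₀ + 2 x₃ - 2 x₄` and `ℓ₂ = -450 x₀ - 75 x₁ + 450 x₂ + 2 x₄` invariant (they are left
eigenvectors for the eigenvalue `1`). So at stage `m` the vector `x` can be sent to
`((x₀ / 25 ^ m + ℓ₁) / 2, (x₁ / 3 ^ m + ℓ₂) / 2, x₂ / 3 ^ m, ℓ₁, ℓ₂)`, compatibly with the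
connecting maps. The halves are forced: on `ℤ⁵` the vector `(x₀, x₁, x₂, ℓ₁, ℓ₂)` ranges exactly
over the vectors with `x₀ ≡ ℓ₁` and `x₁ ≡ ℓ₂` modulo `2`. These maps are injective and every
element of `ℤ[1/25] × ℤ[1/3]² × ℤ²` is hit at a late enough stage, which gives the isomorphism.
-/

open Filter Function Matrix

section IterMap

variable {G H : Type*} [AddCommGroup G] [AddCommGroup H] (A : AddMonoid.End G) (f : ℕ → G →+ H)

theorem apply_iterMap_of_step (hf : ∀ m x, f (m + 1) (A x) = f m x) (i j : ℕ) (hij : i ≤ j)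
    (x : G) : f j (iterMap A i j hij x) = f i x := by
  obtain ⟨k, rfl⟩ := Nat.exists_eq_add_of_le hij
  change f (i + k) (A^[i + k - i] x) = f i x
  rw [Nat.add_sub_cancel_left]
  clear hij
  induction k generalizing i x with
  | zero => rfl
  | succ k ih => rw [iterate_succ_apply, ← add_assoc, add_right_comm, ih, hf]

noncomputable def directLimitIterMapEquiv (hf : ∀ m x, f (m + 1) (A x) = f m x)
    (hinj : ∀ m, Injective (f m)) (hsurj : ∀ y, ∃ m x, f m x = y) :
    AddCommGroup.DirectLimit (fun _ : ℕ => G) (iterMap A) ≃+ H :=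
  AddEquiv.ofBijective (AddCommGroup.DirectLimit.lift _ _ _ f (apply_iterMap_of_step A f hf))
    ⟨AddCommGroup.DirectLimit.lift_injective _ _ _ hinj, fun y => by
      obtain ⟨m, x, rfl⟩ := hsurj y
      exact ⟨AddCommGroup.DirectLimit.of _ _ m x, AddCommGroup.DirectLimit.lift_of ..⟩⟩

end IterMap

section ZOneOver

variable {p : ℕ} (hp : 0 < p)

theorem int_div_pow_mem_zOneOver (a : ℤ) (n : ℕ) : (a : ℚ) / (p : ℚ) ^ n ∈ zOneOver p hp :=
  ⟨a, n, rfl⟩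

theorem half_div_pow_add_mem_zOneOver (hodd : Odd p) {a b : ℤ} (hab : Even (a + b)) (n : ℕ) :
    ((a : ℚ) / (p : ℚ) ^ n + b) / 2 ∈ zOneOver p hp := by
  have hpn : Odd ((p : ℤ) ^ n) := (hodd.natCast (R := ℤ)).pow
  obtain ⟨k, hk⟩ : Even (a + (p : ℤ) ^ n * b) := by
    simpa [Int.even_add, Int.even_mul, Int.not_even_iff_odd.mpr hpn] using hab
  refine ⟨k, n, ?_⟩
  have : (p : ℚ) ≠ 0 := by positivity
  field_simp
  exact_mod_cast hk.trans (two_mul k).symm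

theorem eventually_eq_int_div_pow {q : ℚ} (hq : q ∈ zOneOver p hp) :
    ∀ᶠ n in atTop, ∃ a : ℤ, q = a / (p : ℚ) ^ n := by
  obtain ⟨a, n, rfl⟩ := hq
  filter_upwards [eventually_ge_atTop n] with m hm
  refine ⟨a * p ^ (m - n), ?_⟩
  have : (p : ℚ) ≠ 0 := by positivity
  rw [← Nat.add_sub_cancel' hm, pow_add, Nat.add_sub_cancel_left]
  push_cast
  field_simp

end ZOneOver

theorem pinwheelM_mulVec (x : Fin 5 → ℤ) :
    pinwheelM *ᵥ x = ![25 * x 0, 3 * x 1, 3 * x 2, 15300 * x 0 + 75 * x 1 - 450 * x 2 + x 3,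
      5400 * x 0 + 75 * x 1 - 450 * x 2 + x 4] := by
  ext i
  fin_cases i <;> simp only [pinwheelM, mulVec, dotProduct, Fin.sum_univ_five, of_apply,
    Fin.isValue, Fin.reduceFinMk, cons_val', cons_val, cons_val_zero, cons_val_one,
    cons_val_fin_one]
    <;> ring

def pinwheelInvariant₁ (x : Fin 5 → ℤ) : ℤ := -825 * x 0 + 2 * x 3 - 2 * x 4

def pinwheelInvariant₂ (x : Fin 5 → ℤ) : ℤ := -450 * x 0 - 75 * x 1 + 450 * x 2 + 2 * x 4

theorem pinwheelInvariant₁_mulVec (x : Fin 5 → ℤ) :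
    pinwheelInvariant₁ (pinwheelM *ᵥ x) = pinwheelInvariant₁ x := by
  simp only [pinwheelInvariant₁, pinwheelM_mulVec, cons_val]
  ring

theorem pinwheelInvariant₂_mulVec (x : Fin 5 → ℤ) :
    pinwheelInvariant₂ (pinwheelM *ᵥ x) = pinwheelInvariant₂ x := by
  simp only [pinwheelInvariant₂, pinwheelM_mulVec, cons_val]
  ring

theorem even_add_pinwheelInvariant₁ (x : Fin 5 → ℤ) : Even (x 0 + pinwheelInvariant₁ x) :=
  ⟨-412 * x 0 + x 3 - x 4, by rw [pinwheelInvariant₁]; ring⟩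

theorem even_add_pinwheelInvariant₂ (x : Fin 5 → ℤ) : Even (x 1 + pinwheelInvariant₂ x) :=
  ⟨-225 * x 0 - 37 * x 1 + 225 * x 2 + x 4, by rw [pinwheelInvariant₂]; ring⟩

def pinwheelCoord (m : ℕ) : (Fin 5 → ℤ) →+
    zOneOver 25 (by norm_num) × zOneOver 3 (by norm_num) × zOneOver 3 (by norm_num) × ℤ × ℤ :=
  AddMonoidHom.mk' (fun x =>
    (⟨((x 0 : ℚ) / (25 : ℕ) ^ m + pinwheelInvariant₁ x) / 2,
        half_div_pow_add_mem_zOneOver _ (by decide) (even_add_pinwheelInvariant₁ x) m⟩,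
      ⟨((x 1 : ℚ) / (3 : ℕ) ^ m + pinwheelInvariant₂ x) / 2,
        half_div_pow_add_mem_zOneOver _ (by decide) (even_add_pinwheelInvariant₂ x) m⟩,
      ⟨(x 2 : ℚ) / (3 : ℕ) ^ m, int_div_pow_mem_zOneOver _ (x 2) m⟩,
      pinwheelInvariant₁ x, pinwheelInvariant₂ x))
    fun x y => by
      ext <;> simp only [Pi.add_apply, Prod.mk_add_mk, AddMemClass.mk_add_mk, pinwheelInvariant₁,
        pinwheelInvariant₂] <;> push_cast <;> ring

theorem pinwheelCoord_succ_mulVec (m : ℕ) (x : Fin 5 → ℤ) :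
    pinwheelCoord (m + 1) (pinwheelM *ᵥ x) = pinwheelCoord m x := by
  ext <;> simp only [pinwheelCoord, AddMonoidHom.mk'_apply, pinwheelInvariant₁_mulVec,
    pinwheelInvariant₂_mulVec]
  all_goals simp [pinwheelM_mulVec, pow_succ', mul_div_mul_left]

theorem pinwheelCoord_injective (m : ℕ) : Injective (pinwheelCoord m) := by
  rw [injective_iff_map_eq_zero]
  intro x hx
  simp only [pinwheelCoord, AddMonoidHom.mk'_apply, Prod.ext_iff, Prod.fst_zero, Prod.snd_zero,
    AddSubgroup.mk_eq_zero, div_eq_zero_iff, two_ne_zero, or_false] at hx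
  obtain ⟨h₀, h₁, h₂, h₃, h₄⟩ := hx
  simp only [h₃, h₄, Int.cast_zero, add_zero, div_eq_zero_iff, Int.cast_eq_zero] at h₀ h₁ h₂
  have hx₀ : x 0 = 0 := h₀.resolve_right (by positivity)
  have hx₁ : x 1 = 0 := h₁.resolve_right (by positivity)
  have hx₂ : x 2 = 0 := h₂.resolve_right (by positivity)
  simp only [pinwheelInvariant₁, pinwheelInvariant₂, hx₀, hx₁, hx₂] at h₃ h₄
  have hx₄ : x 4 = 0 := by omega
  have hx₃ : x 3 = 0 := by omega
  ext i
  fin_cases i <;> assumption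

theorem exists_pinwheelCoord_eq
    (y : zOneOver 25 (by norm_num) × zOneOver 3 (by norm_num) × zOneOver 3 (by norm_num) × ℤ × ℤ) :
    ∃ m x, pinwheelCoord m x = y := by
  obtain ⟨⟨q0, hq0⟩, ⟨q1, hq1⟩, ⟨q2, hq2⟩, d, e⟩ := y
  obtain ⟨m, ⟨a, rfl⟩, ⟨b, rfl⟩, ⟨c, rfl⟩⟩ := ((eventually_eq_int_div_pow _ hq0).and
    ((eventually_eq_int_div_pow _ hq1).and (eventually_eq_int_div_pow _ hq2))).exists
  -- `x₀, x₁, x₂` are forced by the first three coordinates once `ℓ₁ x = d` and `ℓ₂ x = e`; these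
  -- two equations are then solvable for `x₃, x₄` because `25 ^ m = 2 t + 1` and `3 ^ m = 2 s + 1`
  obtain ⟨t, ht⟩ : Odd ((25 : ℤ) ^ m) := Odd.pow (by decide)
  obtain ⟨s, hs⟩ : Odd ((3 : ℤ) ^ m) := Odd.pow (by decide)
  set x₄ := 225 * (2 * a - 25 ^ m * d) - 225 * c + 75 * b - 37 * e - 75 * s * e
  set x : Fin 5 → ℤ := ![2 * a - 25 ^ m * d, 2 * b - 3 ^ m * e, c,
    825 * a - 412 * d - 825 * t * d + x₄, x₄]
  have h₁ : pinwheelInvariant₁ x = d := by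
    simp only [pinwheelInvariant₁, x, cons_val]
    linear_combination 825 * d * ht
  have h₂ : pinwheelInvariant₂ x = e := by
    simp only [pinwheelInvariant₂, x, cons_val]
    linear_combination 75 * e * hs
  refine ⟨m, x, ?_⟩
  ext <;> simp only [pinwheelCoord, AddMonoidHom.mk'_apply, h₁, h₂] <;> simp only [x, cons_val]
    <;> push_cast <;> field_simp <;> ring

/-- The direct limit of `ℤ⁵ → ℤ⁵ → ⋯` with all connecting maps `pinwheelM` is
isomorphic to `ℤ[1/25] ⊕ ℤ[1/3]² ⊕ ℤ²`. -/
theorem directLimit_pinwheelM_iso :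
    Nonempty (AddCommGroup.DirectLimit (fun _ : ℕ => (Fin 5 → ℤ))
      (iterMap (Matrix.mulVecLin pinwheelM).toAddMonoidHom) ≃+
        zOneOver 25 (by norm_num) × zOneOver 3 (by norm_num) ×
          zOneOver 3 (by norm_num) × ℤ × ℤ) :=
  ⟨directLimitIterMapEquiv _ pinwheelCoord pinwheelCoord_succ_mulVec pinwheelCoord_injective
    exists_pinwheelCoord_eq⟩
end
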